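/- arXiv:1401.1886 — 3 statements merged into one kernel-verified Lean document; each statement's English description precedes it below -/
import Mathlib

section
/- Let s₀ > 0 and let θ_L be a real number with |（s₀+1)θ_L| < π/2. Then for all θ ∈ (−π/2, π/2), cos^{s₀}(θ)·cos((s₀+1)θ_L − s₀θ) ≤ cos^{s₀+1}(θ_L), with equality if and only if θ = θ_L. -/
open Real Set

/-!
Since `log ∘ cos` is strictly concave on `(-π/2, π/2)`, for `x ≠ y` there the weighted mean
`m = (s x + y)/(s + 1)` satisfies `cos x ^ s * cos y < cos m ^ (s + 1)`. With `x = θ` and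
`y = φ = (s + 1) θL - s θ` the mean is exactly `θL`. When `φ` leaves `(-π/2, π/2)`, either
`cos φ ≤ 0` and there is nothing to prove, or `φ - 2πk` lies inside for some `k ≠ 0`; the mean
then becomes `θL - 2πk/(s + 1)`, which is farther from `0` than `θL` because
`|(s + 1) θL| < π/2`, so its cosine is smaller.
-/

theorem strictConcaveOn_log_cos :
    StrictConcaveOn ℝ (Ioo (-(π / 2)) (π / 2)) (fun x ↦ log (cos x)) := by
  have hpos : cos '' Ioo (-(π / 2)) (π / 2) ⊆ Ioi 0 := by
    rintro _ ⟨x, hx, rfl⟩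
    exact cos_pos_of_mem_Ioo hx
  have hconv : Convex ℝ (cos '' Ioo (-(π / 2)) (π / 2)) :=
    (isPreconnected_Ioo.image _ continuous_cos.continuousOn).convex
  exact (strictConcaveOn_log_Ioi.concaveOn.subset hpos hconv).comp_strictConcaveOn
    (strictConcaveOn_cos_Icc.subset Ioo_subset_Icc_self (convex_Ioo _ _))
    (strictMonoOn_log.mono hpos)

theorem mul_add_div_add_one_mem_Ioo {s a b x y : ℝ} (hs : 0 ≤ s) (hx : x ∈ Ioo a b)
    (hy : y ∈ Ioo a b) : (s * x + y) / (s + 1) ∈ Ioo a b := by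
  have hs1 : 0 < s + 1 := by linarith
  constructor
  · rw [lt_div_iff₀ hs1]; nlinarith [hx.1, hy.1]
  · rw [div_lt_iff₀ hs1]; nlinarith [hx.2, hy.2]

theorem cos_rpow_mul_cos_lt {s x y : ℝ} (hs : 0 < s) (hx : x ∈ Ioo (-(π / 2)) (π / 2))
    (hy : y ∈ Ioo (-(π / 2)) (π / 2)) (hxy : x ≠ y) :
    cos x ^ s * cos y < cos ((s * x + y) / (s + 1)) ^ (s + 1) := by
  have hs1 : 0 < s + 1 := by linarith
  have hcm := cos_pos_of_mem_Ioo (mul_add_div_add_one_mem_Ioo hs.le hx hy)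
  have hlog : s / (s + 1) * log (cos x) + 1 / (s + 1) * log (cos y) <
      log (cos (s / (s + 1) * x + 1 / (s + 1) * y)) :=
    strictConcaveOn_log_cos.2 hx hy hxy (by positivity) (by positivity) (by field_simp)
  rw [show s / (s + 1) * x + 1 / (s + 1) * y = (s * x + y) / (s + 1) by field_simp] at hlog
  rw [rpow_def_of_pos (cos_pos_of_mem_Ioo hx), rpow_def_of_pos hcm,
    ← exp_log (cos_pos_of_mem_Ioo hy), ← exp_add, exp_lt_exp]
  have := mul_lt_mul_of_pos_left hlog hs1
  field_simp at this
  linarith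

theorem cos_rpow_mul_cos_le {s x y : ℝ} (hs : 0 < s) (hx : x ∈ Ioo (-(π / 2)) (π / 2))
    (hy : y ∈ Ioo (-(π / 2)) (π / 2)) :
    cos x ^ s * cos y ≤ cos ((s * x + y) / (s + 1)) ^ (s + 1) := by
  rcases eq_or_ne x y with rfl | hxy
  · have hs1 : s + 1 ≠ 0 := by linarith
    rw [show (s * x + x) / (s + 1) = x by field_simp, rpow_add_one (cos_pos_of_mem_Ioo hx).ne']
  · exact (cos_rpow_mul_cos_lt hs hx hy hxy).le

theorem exists_sub_int_mul_two_pi_mem_Ioo_of_cos_pos {φ : ℝ} (h : 0 < cos φ) :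
    ∃ k : ℤ, φ - k * (2 * π) ∈ Ioo (-(π / 2)) (π / 2) := by
  obtain ⟨k, hk⟩ := Angle.angle_eq_iff_two_pi_dvd_sub.1 (Angle.coe_toReal (φ : Angle)).symm
  refine ⟨k, ?_⟩
  rw [mul_comm, ← hk, sub_sub_cancel, mem_Ioo, ← abs_lt,
    ← Angle.cos_pos_iff_abs_toReal_lt_pi_div_two, Angle.cos_coe]
  exact h

theorem abs_lt_abs_sub_int_mul_two_pi {a : ℝ} (ha : |a| < π) {k : ℤ} (hk : k ≠ 0) :
    |a| < |a - k * (2 * π)| := by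
  have hk1 : (1 : ℝ) ≤ |(k : ℝ)| := by exact_mod_cast Int.one_le_abs hk
  have h2pi : 2 * π ≤ |k * (2 * π)| := by
    rw [abs_mul, abs_of_pos two_pi_pos]
    nlinarith [pi_pos]
  have := abs_sub_abs_le_abs_sub (k * (2 * π)) a
  rw [abs_sub_comm] at this
  linarith

theorem cos_lt_cos_of_abs_lt {x y : ℝ} (hxy : |x| < |y|) (hy : |y| ≤ π) : cos y < cos x := by
  simpa only [cos_abs] using cos_lt_cos_of_nonneg_of_le_pi (abs_nonneg x) hy hxy

theorem abs_lt_of_abs_mul_lt_of_one_le {c x r : ℝ} (hc : 1 ≤ c) (h : |c * x| < r) : |x| < r := by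
  rw [abs_mul, abs_of_pos (by linarith)] at h
  nlinarith [abs_nonneg x]

theorem cos_rpow_mul_cos_sub_lt {s θL θ : ℝ} (hs : 0 < s) (hθL : |(s + 1) * θL| < π / 2)
    (hθ : θ ∈ Ioo (-(π / 2)) (π / 2)) (hne : θ ≠ θL) :
    cos θ ^ s * cos ((s + 1) * θL - s * θ) < cos θL ^ (s + 1) := by
  have hs1 : 0 < s + 1 := by linarith
  have hθL' := abs_lt.1 (abs_lt_of_abs_mul_lt_of_one_le (by linarith) hθL)
  set φ := (s + 1) * θL - s * θ
  rcases le_or_gt (cos φ) 0 with hφ | hφ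
  · exact (mul_nonpos_of_nonneg_of_nonpos (rpow_nonneg (cos_pos_of_mem_Ioo hθ).le _) hφ).trans_lt
      (rpow_pos_of_pos (cos_pos_of_mem_Ioo hθL') _)
  obtain ⟨k, hk⟩ := exists_sub_int_mul_two_pi_mem_Ioo_of_cos_pos hφ
  set m := (s * θ + (φ - k * (2 * π))) / (s + 1)
  have hm : (s + 1) * m = (s + 1) * θL - k * (2 * π) := by
    simp only [m, φ]; field_simp; ring
  rw [← cos_sub_int_mul_two_pi φ k]
  rcases eq_or_ne k 0 with rfl | hk0
  · have hθφ : θ ≠ φ := fun h ↦ hne (mul_left_cancel₀ hs1.ne' (by simp only [φ] at h; linarith))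
    have hmθL : m = θL := mul_left_cancel₀ hs1.ne' (by simpa using hm)
    rw [← hmθL]
    exact cos_rpow_mul_cos_lt hs hθ hk (by simpa using hθφ)
  have hmI : m ∈ Ioo (-(π / 2)) (π / 2) := mul_add_div_add_one_mem_Ioo hs.le hθ hk
  have habs : |θL| < |m| := by
    have := abs_lt_abs_sub_int_mul_two_pi (hθL.trans (by linarith [pi_pos])) hk0
    rwa [← hm, abs_mul, abs_mul, abs_of_pos hs1, mul_lt_mul_iff_right₀ hs1] at this
  calc cos θ ^ s * cos (φ - k * (2 * π)) ≤ cos m ^ (s + 1) := cos_rpow_mul_cos_le hs hθ hk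
    _ < cos θL ^ (s + 1) :=
      rpow_lt_rpow (cos_pos_of_mem_Ioo hmI).le
        (cos_lt_cos_of_abs_lt habs (by linarith [abs_lt.2 ⟨hmI.1, hmI.2⟩, pi_pos])) hs1

theorem saddle_point_inequality (s₀ θL : ℝ) (hs : 0 < s₀)
    (hθL : |(s₀ + 1) * θL| < Real.pi / 2) :
    ∀ θ ∈ Set.Ioo (-(Real.pi / 2)) (Real.pi / 2),
      Real.cos θ ^ s₀ * Real.cos ((s₀ + 1) * θL - s₀ * θ) ≤ Real.cos θL ^ (s₀ + 1) ∧
      (Real.cos θ ^ s₀ * Real.cos ((s₀ + 1) * θL - s₀ * θ) = Real.cos θL ^ (s₀ + 1) ↔ θ = θL) := by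
  intro θ hθ
  have hθL' := abs_lt.1 (abs_lt_of_abs_mul_lt_of_one_le (by linarith) hθL)
  have heq : cos θL ^ s₀ * cos ((s₀ + 1) * θL - s₀ * θL) = cos θL ^ (s₀ + 1) := by
    rw [show (s₀ + 1) * θL - s₀ * θL = θL by ring, rpow_add_one (cos_pos_of_mem_Ioo hθL').ne']
  rcases eq_or_ne θ θL with rfl | hne
  · exact ⟨heq.le, iff_of_true heq rfl⟩
  · have hlt := cos_rpow_mul_cos_sub_lt hs hθL hθ hne
    exact ⟨hlt.le, iff_of_false hlt.ne hne⟩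
end

section
/- For s₀ > 0, any complex Φ with Φ = |Φ|e^{i(s₀+1)θ_L}, (s₀+1)|θ_L| < π/2, and any real α > 0, n > 0, v: Re( Φ/(s₀(2πα − 2πiv)^{s₀}) + 2πn(α − iv) ) ≤ |Φ|/(s₀(2πα)^{s₀}) · cos^{s₀+1}(θ_L) + 2πnα. -/
/-!
Write `w = 2πα - 2πiv = ‖w‖ e^{ia}` with `|a| < π/2`. The real part of `Φ / (s w^s)` is
`‖Φ‖ / (s ‖w‖^s) · cos b` with `b = (s+1)θ - s a`, and `2πα = ‖w‖ cos a`, so everything reduces to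
`cos b · cos^s a ≤ cos^{s+1} θ`. When `cos b > 0`, move `b` modulo `2π` to some `b' ∈ (-π/2, π/2)`;
weighted AM-GM and concavity of `cos` on `[-π/2, π/2]` bound the left side by `cos^{s+1} θ'` with
`θ' = (s a + b')/(s+1)`. Now `θ'` differs from `θ` by a multiple of `2π/(s+1)`, while
`(s+1)|θ| < π/2`, so `|θ| ≤ |θ'|`.
-/

open Real

theorem mul_rpow_le_weighted_mean_rpow {s x y : ℝ} (hs : 0 ≤ s) (hx : 0 ≤ x) (hy : 0 ≤ y) :
    y * x ^ s ≤ ((s * x + y) / (s + 1)) ^ (s + 1) := by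
  have hs₁ : 0 < s + 1 := by linarith
  have amgm : x ^ (s / (s + 1)) * y ^ (1 / (s + 1)) ≤ (s * x + y) / (s + 1) := by
    have := geom_mean_le_arith_mean2_weighted (div_nonneg hs hs₁.le) (one_div_nonneg.2 hs₁.le)
      hx hy (by field_simp)
    convert this using 1
    field_simp
  calc y * x ^ s
      = (x ^ (s / (s + 1)) * y ^ (1 / (s + 1))) ^ (s + 1) := by
        rw [mul_rpow (by positivity) (by positivity), ← rpow_mul hx, ← rpow_mul hy,
          div_mul_cancel₀ _ hs₁.ne', one_div_mul_cancel hs₁.ne', rpow_one, mul_comm]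
    _ ≤ ((s * x + y) / (s + 1)) ^ (s + 1) := rpow_le_rpow (by positivity) amgm hs₁.le

theorem weighted_mean_cos_le_cos_weighted_mean {s a b : ℝ} (hs : 0 ≤ s) (ha : |a| ≤ π / 2)
    (hb : |b| ≤ π / 2) :
    (s * cos a + cos b) / (s + 1) ≤ cos ((s * a + b) / (s + 1)) := by
  have hs₁ : 0 < s + 1 := by linarith
  have := strictConcaveOn_cos_Icc.concaveOn.2 (abs_le.1 ha) (abs_le.1 hb)
    (div_nonneg hs hs₁.le) (one_div_nonneg.2 hs₁.le) (by field_simp)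
  simp only [smul_eq_mul] at this
  rwa [show (s * a + b) / (s + 1) = s / (s + 1) * a + 1 / (s + 1) * b by ring,
    show (s * cos a + cos b) / (s + 1) = s / (s + 1) * cos a + 1 / (s + 1) * cos b by ring]

theorem cos_mul_cos_rpow_le_cos_weighted_mean_rpow {s a b : ℝ} (hs : 0 ≤ s) (ha : |a| ≤ π / 2)
    (hb : |b| ≤ π / 2) :
    cos b * cos a ^ s ≤ cos ((s * a + b) / (s + 1)) ^ (s + 1) := by
  have hca := cos_nonneg_of_mem_Icc (abs_le.1 ha)
  have hcb := cos_nonneg_of_mem_Icc (abs_le.1 hb)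
  refine (mul_rpow_le_weighted_mean_rpow hs hca hcb).trans (rpow_le_rpow (by positivity)
    (weighted_mean_cos_le_cos_weighted_mean hs ha hb) (by linarith))

theorem exists_abs_sub_int_mul_two_pi_lt_of_cos_pos {b : ℝ} (hb : 0 < cos b) :
    ∃ k : ℤ, |b - k * (2 * π)| < π / 2 := by
  obtain ⟨k, hk⟩ :=
    Real.Angle.angle_eq_iff_two_pi_dvd_sub.1 (Real.Angle.coe_toReal (b : Real.Angle)).symm
  refine ⟨k, ?_⟩
  have := Real.Angle.cos_pos_iff_abs_toReal_lt_pi_div_two.1 ((Real.Angle.cos_coe b).symm ▸ hb)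
  rwa [show b - k * (2 * π) = (b : Real.Angle).toReal by linarith]

theorem cos_le_cos_of_mul_sub_eq_int_mul_two_pi {c θ θ' : ℝ} {k : ℤ} (hc : 0 < c)
    (hθ : c * |θ| ≤ π) (hθ' : |θ'| ≤ π) (h : c * θ' - c * θ = k * (2 * π)) :
    cos θ' ≤ cos θ := by
  have hle : |θ| ≤ |θ'| := by
    refine le_of_mul_le_mul_left ?_ hc
    rcases eq_or_ne k 0 with rfl | hk
    · rw [← mul_sub, Int.cast_zero, zero_mul, mul_eq_zero, sub_eq_zero] at h
      rw [h.resolve_left hc.ne']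
    · have hk₁ : (1 : ℝ) ≤ |(k : ℝ)| := by exact_mod_cast Int.one_le_abs hk
      have := abs_sub (c * θ') (c * θ)
      rw [h, abs_mul (k : ℝ), abs_of_pos two_pi_pos, abs_mul c, abs_mul c, abs_of_pos hc] at this
      nlinarith [pi_pos]
  rw [← cos_abs θ', ← cos_abs θ]
  exact cos_le_cos_of_nonneg_of_le_pi (abs_nonneg θ) hθ' hle

theorem cos_mul_cos_rpow_le_cos_rpow {s a b θ : ℝ} (hs : 0 ≤ s) (ha : |a| ≤ π / 2)
    (hθ : (s + 1) * |θ| ≤ π / 2) (h : s * a + b = (s + 1) * θ) :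
    cos b * cos a ^ s ≤ cos θ ^ (s + 1) := by
  have hs₁ : 0 < s + 1 := by linarith
  have hθ_le : |θ| ≤ π / 2 := le_trans (le_mul_of_one_le_left (abs_nonneg θ) (by linarith)) hθ
  have hcθ := cos_nonneg_of_mem_Icc (abs_le.1 hθ_le)
  have hca := cos_nonneg_of_mem_Icc (abs_le.1 ha)
  rcases le_or_gt (cos b) 0 with hb | hb
  · exact (mul_nonpos_of_nonpos_of_nonneg hb (rpow_nonneg hca s)).trans (rpow_nonneg hcθ _)
  obtain ⟨k, hk⟩ := exists_abs_sub_int_mul_two_pi_lt_of_cos_pos hb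
  set b' := b - k * (2 * π)
  set θ' := (s * a + b') / (s + 1)
  have hθ' : |θ'| ≤ π / 2 := by
    rw [abs_div, abs_of_pos hs₁, div_le_iff₀ hs₁]
    calc |s * a + b'| ≤ s * |a| + |b'| := by
          simpa only [abs_mul, abs_of_nonneg hs] using abs_add_le (s * a) b'
      _ ≤ π / 2 * (s + 1) := by nlinarith
  have hcos : cos θ' ≤ cos θ := by
    refine cos_le_cos_of_mul_sub_eq_int_mul_two_pi (k := -k) hs₁ (by linarith [pi_pos])
      (by linarith [pi_pos]) ?_
    simp only [θ', b', mul_div_cancel₀ _ hs₁.ne', Int.cast_neg]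
    linarith
  calc cos b * cos a ^ s = cos b' * cos a ^ s := by rw [cos_sub_int_mul_two_pi]
    _ ≤ cos θ' ^ (s + 1) := cos_mul_cos_rpow_le_cos_weighted_mean_rpow hs ha hk.le
    _ ≤ cos θ ^ (s + 1) := rpow_le_rpow (cos_nonneg_of_mem_Icc (abs_le.1 hθ')) hcos hs₁.le

theorem Complex.cpow_ofReal_eq_mul_exp (w : ℂ) (s : ℝ) :
    w ^ (s : ℂ) = (‖w‖ ^ s : ℝ) * Complex.exp (Complex.I * (s * Complex.arg w : ℝ)) := by
  rw [Complex.cpow_ofReal, mul_comm Complex.I, Complex.exp_mul_I, mul_comm s,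
    ← Complex.ofReal_cos, ← Complex.ofReal_sin]

theorem Complex.re_mul_exp_div_cpow (w : ℂ) (r φ s : ℝ) :
    ((r : ℂ) * Complex.exp (Complex.I * φ) / (s * w ^ (s : ℂ))).re
      = r / (s * ‖w‖ ^ s) * Real.cos (φ - s * Complex.arg w) := by
  have hsplit : Complex.exp (Complex.I * φ)
      = Complex.exp (Complex.I * (φ - s * Complex.arg w : ℝ))
        * Complex.exp (Complex.I * (s * Complex.arg w : ℝ)) := by
    rw [← Complex.exp_add]; push_cast; ring_nf
  rw [Complex.cpow_ofReal_eq_mul_exp, hsplit, ← mul_assoc, ← mul_assoc,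
    mul_div_mul_right _ _ (Complex.exp_ne_zero _), mul_div_right_comm, ← Complex.ofReal_mul,
    ← Complex.ofReal_div, Complex.re_ofReal_mul, mul_comm Complex.I,
    Complex.exp_ofReal_mul_I_re]

theorem exponent_real_part_bound_general (s₀ θL α n v : ℝ) (hs : 0 < s₀) (hα : 0 < α)
    (Φ : ℂ) (hΦ : Φ = (‖Φ‖ : ℂ) * Complex.exp (Complex.I * ((s₀ + 1) * θL)))
    (hθL : (s₀ + 1) * |θL| < Real.pi / 2) :
    (Φ / (s₀ * ((2 * Real.pi * α : ℂ) - 2 * Real.pi * Complex.I * v) ^ (s₀ : ℂ))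
        + 2 * Real.pi * n * ((α : ℂ) - Complex.I * v)).re
      ≤ ‖Φ‖ / (s₀ * (2 * Real.pi * α) ^ s₀) * Real.cos θL ^ (s₀ + 1)
        + 2 * Real.pi * n * α := by
  set w : ℂ := (2 * π * α : ℂ) - 2 * π * Complex.I * v
  have hw_re : w.re = 2 * π * α := by simp [w]
  have ha : |Complex.arg w| < π / 2 :=
    Complex.abs_arg_lt_pi_div_two_iff.2 (Or.inl (hw_re ▸ by positivity))
  have hcos_arg : 0 < cos (Complex.arg w) := cos_pos_of_mem_Ioo (abs_lt.1 ha)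
  have hcore := cos_mul_cos_rpow_le_cos_rpow (b := (s₀ + 1) * θL - s₀ * Complex.arg w)
    hs.le ha.le hθL.le (by ring)
  generalize hr : ‖Φ‖ = r at hΦ ⊢
  have hr₀ : 0 ≤ r := hr ▸ norm_nonneg Φ
  subst hΦ
  rw [Complex.add_re, show Complex.I * ((s₀ + 1) * θL) = Complex.I * ((s₀ + 1) * θL : ℝ) by
    push_cast; ring, Complex.re_mul_exp_div_cpow, ← hw_re, ← Complex.norm_mul_cos_arg w,
    mul_rpow (norm_nonneg w) hcos_arg.le]
  gcongr ?_ + ?_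
  · calc r / (s₀ * ‖w‖ ^ s₀) * cos ((s₀ + 1) * θL - s₀ * Complex.arg w)
        = r / (s₀ * (‖w‖ ^ s₀ * cos (Complex.arg w) ^ s₀))
          * (cos ((s₀ + 1) * θL - s₀ * Complex.arg w) * cos (Complex.arg w) ^ s₀) := by
          field_simp
      _ ≤ _ := by gcongr
  · simp

theorem exponent_real_part_bound (s₀ θL α n v : ℝ) (hs : 0 < s₀) (hα : 0 < α) (hn : 0 < n)
    (Φ : ℂ) (hΦ : Φ = (‖Φ‖ : ℂ) * Complex.exp (Complex.I * ((s₀ + 1) * θL)))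
    (hθL : (s₀ + 1) * |θL| < Real.pi / 2) :
    (Φ / (s₀ * ((2 * Real.pi * α : ℂ) - 2 * Real.pi * Complex.I * v) ^ (s₀ : ℂ))
        + 2 * Real.pi * n * ((α : ℂ) - Complex.I * v)).re
      ≤ ‖Φ‖ / (s₀ * (2 * Real.pi * α) ^ s₀) * Real.cos θL ^ (s₀ + 1)
        + 2 * Real.pi * n * α :=
  exponent_real_part_bound_general s₀ θL α n v hs hα Φ hΦ hθL
end

section
/- Let a : ℕ → ℂ be periodic with period j and bounded by M. Then the Dirichlet series D(s) = ∑_{m=1}^∞ a(m)/m^s, which converges for Re s > 1, extends to a meromorphic function on ℂ with at most a simple pole at s = 1, whose residue equals (1/j)∑_{r=1}^{j} a(r). -/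
/-!
Reducing `a` modulo `j` gives `Φ : ZMod j → ℂ` whose L-series is the given Dirichlet series.
Mathlib's `ZMod.LFunction Φ` is the Hurwitz-zeta combination `j^{-s} ∑ Φ r ζ(s, r/j)`, so its
continuation, holomorphy away from `s = 1` and residue `∑ Φ r / j` are inherited from the Hurwitz
zeta function; periodicity turns the sum over residues into the sum over `1, …, j`.
-/

open Finset

theorem LSeries_eq_tsum_succ (f : ℕ → ℂ) (s : ℂ) :
    LSeries f s = ∑' m : ℕ, f (m + 1) / ((m : ℂ) + 1) ^ s := by
  have hsupp : Function.support (LSeries.term f s) ⊆ Set.range Nat.succ := by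
    rintro (_ | m) hm
    · exact absurd (LSeries.term_zero f s) hm
    · exact ⟨m, rfl⟩
  rw [LSeries, ← Nat.succ_injective.tsum_eq hsupp]
  congr 1 with m
  rw [LSeries.term_of_ne_zero m.succ_ne_zero]
  push_cast
  rfl

theorem Function.Periodic.sum_Icc_one_eq_sum_range {M : Type*} [AddCommMonoid M] {a : ℕ → M}
    {j : ℕ} (h : Function.Periodic a j) : ∑ r ∈ Icc 1 j, a r = ∑ r ∈ range j, a r := by
  rcases j with _ | k
  · rfl
  have hk : a (k + 1) = a 0 := by simpa using h 0
  rw [← Ico_add_one_right_eq_Icc, sum_Ico_eq_sum_range, Nat.add_sub_cancel, sum_range_succ,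
    sum_range_succ', add_comm 1 k, hk]
  simp only [add_comm 1]

theorem Function.Periodic.apply_natCast_val {α : Type*} {a : ℕ → α} {j : ℕ}
    (h : Function.Periodic a j) (m : ℕ) : a (m : ZMod j).val = a m := by
  rw [ZMod.val_natCast, h.map_mod_nat]

theorem ZMod.sum_comp_val {M : Type*} [AddCommMonoid M] (n : ℕ) [NeZero n] (f : ℕ → M) :
    ∑ i : ZMod n, f i.val = ∑ i ∈ range n, f i := by
  obtain ⟨k, rfl⟩ := Nat.exists_eq_succ_of_ne_zero (NeZero.ne n)
  exact Fin.sum_univ_eq_sum_range f (k + 1)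

theorem periodic_dirichlet_meromorphic_general (j : ℕ) (hj : 0 < j) (a : ℕ → ℂ)
    (hper : ∀ m : ℕ, a (m + j) = a m) :
    ∃ F : ℂ → ℂ,
      (∀ s : ℂ, 1 < s.re → F s = ∑' m : ℕ, a (m + 1) / ((m : ℂ) + 1) ^ s) ∧
      AnalyticOnNhd ℂ F {(1 : ℂ)}ᶜ ∧
      Filter.Tendsto (fun s => (s - 1) * F s) (nhdsWithin 1 {(1 : ℂ)}ᶜ)
        (nhds ((1 / (j : ℂ)) * ∑ r ∈ Finset.Icc 1 j, a r)) := by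
  have : NeZero j := ⟨hj.ne'⟩
  have hperiodic : Function.Periodic a j := hper
  let Φ : ZMod j → ℂ := fun n ↦ a n.val
  have hΦ : (fun m : ℕ ↦ Φ m) = a := funext hperiodic.apply_natCast_val
  refine ⟨ZMod.LFunction Φ, fun s hs ↦ ?_, ?_, ?_⟩
  · rw [ZMod.LFunction_eq_LSeries Φ hs, hΦ, LSeries_eq_tsum_succ]
  · have hdiff : DifferentiableOn ℂ (ZMod.LFunction Φ) {1}ᶜ := fun s hs ↦
      (ZMod.differentiableAt_LFunction Φ s (.inl hs)).differentiableWithinAt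
    exact hdiff.analyticOnNhd isOpen_compl_singleton
  · have hres : ∑ n, Φ n / j = 1 / j * ∑ r ∈ Icc 1 j, a r := by
      rw [← sum_div, ZMod.sum_comp_val, hperiodic.sum_Icc_one_eq_sum_range, one_div_mul_eq_div]
    exact hres ▸ ZMod.LFunction_residue_one Φ

theorem periodic_dirichlet_meromorphic (j : ℕ) (hj : 0 < j) (M : ℝ) (a : ℕ → ℂ)
    (hper : ∀ m : ℕ, a (m + j) = a m) (hbd : ∀ m, ‖a m‖ ≤ M) :
    ∃ F : ℂ → ℂ,
      (∀ s : ℂ, 1 < s.re → F s = ∑' m : ℕ, a (m + 1) / ((m : ℂ) + 1) ^ s) ∧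
      AnalyticOnNhd ℂ F {(1 : ℂ)}ᶜ ∧
      Filter.Tendsto (fun s => (s - 1) * F s) (nhdsWithin 1 {(1 : ℂ)}ᶜ)
        (nhds ((1 / (j : ℂ)) * ∑ r ∈ Finset.Icc 1 j, a r)) :=
  periodic_dirichlet_meromorphic_general j hj a hper
end
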